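/- Let V be a 4-dimensional vector space and φ = c + β + γ ∈ Λᵉᵛ V* ⊗ ℂ with c ∈ ℂ nonzero, β ∈ Λ²V*⊗ℂ, γ ∈ Λ⁴V*⊗ℂ, satisfying 2cγ = β² (purity) and ⟨φ, φ̄⟩ = cγ̄ - β∧β̄ + c̄γ ≠ 0. Then writing β/c = B + iω with B, ω real 2-forms, ω∧ω ≠ 0 (ω is nondegenerate) and φ = c·exp(B + iω). -/
import Mathlib


set_option synthInstance.maxHeartbeats 1000000
set_option maxHeartbeats 1000000

/-!
STATEMENT 15: Let `V` be a 4-dimensional vector space and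
`φ = c + β + γ ∈ Λᵉᵛ V* ⊗ ℂ` with `c ∈ ℂ` nonzero, `β ∈ Λ²V*⊗ℂ`, `γ ∈ Λ⁴V*⊗ℂ`,
satisfying `2cγ = β²` (purity) and `⟨φ, φ̄⟩ = cγ̄ - β∧β̄ + c̄γ ≠ 0`.  Then, writing
`β/c = B + iω` with `B, ω` real 2-forms, `ω ∧ ω ≠ 0` (`ω` is nondegenerate) and
`φ = c·exp(B + iω)`.
Here `W` plays the role of `V*` (so `dim W = 4`) and complex forms are modelled as
pairs `(real part, imaginary part)`.
-/

open ExteriorAlgebra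

variable {W : Type*} [AddCommGroup W] [Module ℝ W]

/-- A complex form, as a pair (real part, imaginary part). -/
abbrev CForm (W : Type*) [AddCommGroup W] [Module ℝ W] :=
  ExteriorAlgebra ℝ W × ExteriorAlgebra ℝ W

/-- Wedge product of complex forms. -/
def cmul (x y : CForm W) : CForm W :=
  (x.1 * y.1 - x.2 * y.2, x.1 * y.2 + x.2 * y.1)

/-- Complex conjugation of a complex form. -/
def cconj (x : CForm W) : CForm W := (x.1, -x.2)

/-- Scalar multiplication of a complex form by a complex number. -/
def csmul (c : ℂ) (x : CForm W) : CForm W :=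
  (c.re • x.1 - c.im • x.2, c.im • x.1 + c.re • x.2)

/-- The constant (degree-0) complex form `c`. -/
noncomputable def cconst (c : ℂ) : CForm W :=
  (algebraMap ℝ (ExteriorAlgebra ℝ W) c.re, algebraMap ℝ (ExteriorAlgebra ℝ W) c.im)

/-- Wedge powers of a complex form. -/
def cpow (x : CForm W) : ℕ → CForm W
  | 0 => (1, 0)
  | k + 1 => cmul x (cpow x k)

/-- The exponential `exp x = Σ xᵏ/k!` of a complex form (a finite sum). -/
noncomputable def cexp [FiniteDimensional ℝ W] (x : CForm W) : CForm W :=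
  ∑ k ∈ Finset.range (Module.finrank ℝ W + 1), (k.factorial : ℝ)⁻¹ • cpow x k

section Aux

variable {W : Type*} [AddCommGroup W] [Module ℝ W]

lemma csmul_csmul (a b : ℂ) (x : CForm W) : csmul a (csmul b x) = csmul (a * b) x := by
  simp only [csmul, Complex.mul_re, Complex.mul_im, Prod.mk.injEq]
  constructor <;> module

lemma csmul_one (x : CForm W) : csmul 1 x = x := by
  simp [csmul]

lemma csmul_add (a : ℂ) (x y : CForm W) : csmul a (x + y) = csmul a x + csmul a y := by
  simp only [csmul, Prod.fst_add, Prod.snd_add, Prod.mk_add_mk, Prod.mk.injEq,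
    smul_add]
  constructor <;> try abel

lemma csmul_smul (a : ℂ) (r : ℝ) (x : CForm W) : csmul a (r • x) = r • csmul a x := by
  simp only [csmul, Prod.smul_fst, Prod.smul_snd, Prod.smul_mk, Prod.mk.injEq, smul_sub,
    smul_add, smul_comm r]

lemma csmul_real (r : ℝ) (x : CForm W) : csmul (r : ℂ) x = r • x := by
  simp [csmul, Prod.ext_iff]

lemma cmul_csmul_left (a : ℂ) (x y : CForm W) : cmul (csmul a x) y = csmul a (cmul x y) := by
  simp only [cmul, csmul, Prod.mk.injEq, sub_mul, add_mul, smul_mul_assoc, smul_sub, smul_add]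
  constructor <;> try abel

lemma cmul_csmul_right (a : ℂ) (x y : CForm W) : cmul x (csmul a y) = csmul a (cmul x y) := by
  simp only [cmul, csmul, Prod.mk.injEq, mul_sub, mul_add, mul_smul_comm, smul_sub, smul_add]
  constructor <;> try abel

lemma cconj_csmul (a : ℂ) (x : CForm W) :
    cconj (csmul a x) = csmul (starRingEnd ℂ a) (cconj x) := by
  simp only [cconj, csmul, Complex.conj_re, Complex.conj_im, Prod.mk.injEq, smul_neg,
    neg_smul, neg_add, neg_neg]

lemma cconj_cmul (x y : CForm W) : cconj (cmul x y) = cmul (cconj x) (cconj y) := by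
  simp only [cconj, cmul, Prod.mk.injEq, mul_neg, neg_mul, neg_neg, neg_add, sub_eq_add_neg]


lemma cmul_one' (x : CForm W) : cmul x ((1 : ExteriorAlgebra ℝ W), (0 : ExteriorAlgebra ℝ W)) = x := by
  simp [cmul]

lemma cmul_zero' (x : CForm W) : cmul x (0 : CForm W) = 0 := by
  simp [cmul, Prod.ext_iff]

lemma exteriorPower_eq_bot_of_lt [FiniteDimensional ℝ W] {n : ℕ}
    (h : Module.finrank ℝ W < n) : ⋀[ℝ]^n W = ⊥ := by
  rw [← ExteriorAlgebra.ιMulti_span_fixedDegree]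
  rw [Submodule.span_eq_bot]
  rintro x ⟨v, rfl⟩
  refine AlternatingMap.map_linearDependent _ v fun hli => ?_
  have := hli.fintype_card_le_finrank
  simp only [Fintype.card_fin] at this
  omega

lemma triple_wedge_zero [FiniteDimensional ℝ W] (hdim : Module.finrank ℝ W = 4)
    {u v w : ExteriorAlgebra ℝ W} (hu : u ∈ ⋀[ℝ]^2 W) (hv : v ∈ ⋀[ℝ]^2 W)
    (hw : w ∈ ⋀[ℝ]^2 W) : u * (v * w) = 0 := by
  have h6 : u * (v * w) ∈ ⋀[ℝ]^6 W := by
    have : (⋀[ℝ]^6 W : Submodule ℝ (ExteriorAlgebra ℝ W)) =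
        ⋀[ℝ]^2 W * (⋀[ℝ]^2 W * ⋀[ℝ]^2 W) := by
      rw [exteriorPower, exteriorPower, ← pow_add, ← pow_add]
    rw [this]
    exact Submodule.mul_mem_mul hu (Submodule.mul_mem_mul hv hw)
  rw [exteriorPower_eq_bot_of_lt (by omega)] at h6
  simpa using h6

lemma ι_sq_comm (x u v : W) :
    ι ℝ x * (ι ℝ u * ι ℝ v) = (ι ℝ u * ι ℝ v) * ι ℝ x := by
  have hswap : ∀ p q : W, ι ℝ p * ι ℝ q = -(ι ℝ q * ι ℝ p) := fun p q =>
    eq_neg_of_add_eq_zero_left (ExteriorAlgebra.ι_add_mul_swap p q)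
  calc ι ℝ x * (ι ℝ u * ι ℝ v) = (ι ℝ x * ι ℝ u) * ι ℝ v := by rw [mul_assoc]
    _ = -(ι ℝ u * ι ℝ x) * ι ℝ v := by rw [hswap x u]
    _ = -(ι ℝ u * (ι ℝ x * ι ℝ v)) := by rw [neg_mul, mul_assoc]
    _ = -(ι ℝ u * -(ι ℝ v * ι ℝ x)) := by rw [hswap x v]
    _ = ι ℝ u * (ι ℝ v * ι ℝ x) := by rw [mul_neg, neg_neg]
    _ = (ι ℝ u * ι ℝ v) * ι ℝ x := by rw [mul_assoc]

lemma wedge2_comm {a b : ExteriorAlgebra ℝ W} (ha : a ∈ ⋀[ℝ]^2 W) (hb : b ∈ ⋀[ℝ]^2 W) :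
    a * b = b * a := by
  rw [← ExteriorAlgebra.ιMulti_span_fixedDegree] at ha hb
  induction ha, hb using Submodule.span_induction₂ with
  | mem_mem x y hx hy =>
    obtain ⟨p, rfl⟩ := hx
    obtain ⟨q, rfl⟩ := hy
    rw [ExteriorAlgebra.ιMulti_apply, ExteriorAlgebra.ιMulti_apply]
    simp only [List.ofFn_succ, List.prod_cons, List.ofFn_zero, List.prod_nil, mul_one,
      Matrix.cons_val_zero, Matrix.cons_val_one, Matrix.head_cons, Fin.isValue]
    calc ι ℝ (p 0) * ι ℝ (p 1) * (ι ℝ (q 0) * ι ℝ (q 1))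
        = ι ℝ (p 0) * (ι ℝ (p 1) * (ι ℝ (q 0) * ι ℝ (q 1))) := by rw [mul_assoc]
      _ = ι ℝ (p 0) * ((ι ℝ (q 0) * ι ℝ (q 1)) * ι ℝ (p 1)) := by rw [ι_sq_comm]
      _ = (ι ℝ (p 0) * (ι ℝ (q 0) * ι ℝ (q 1))) * ι ℝ (p 1) := by simp only [mul_assoc]
      _ = ((ι ℝ (q 0) * ι ℝ (q 1)) * ι ℝ (p 0)) * ι ℝ (p 1) := by rw [ι_sq_comm]
      _ = ι ℝ (q 0) * ι ℝ (q 1) * (ι ℝ (p 0) * ι ℝ (p 1)) := by simp only [mul_assoc]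
  | zero_left y hy => simp
  | zero_right x hx => simp
  | add_left x y z hx hy hz h1 h2 => rw [add_mul, mul_add, h1, h2]
  | add_right x y z hx hy hz h1 h2 => rw [mul_add, add_mul, h1, h2]
  | smul_left r x y hx hy h => rw [smul_mul_assoc, mul_smul_comm, h]
  | smul_right r x y hx hy h => rw [smul_mul_assoc, mul_smul_comm, h]

end Aux

theorem dimension_four_even_type [FiniteDimensional ℝ W]
    (hdim : Module.finrank ℝ W = 4)
    (c : ℂ) (hc : c ≠ 0)
    (β γ : CForm W)
    (hβ : β.1 ∈ ⋀[ℝ]^2 W ∧ β.2 ∈ ⋀[ℝ]^2 W)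
    (hγ : γ.1 ∈ ⋀[ℝ]^4 W ∧ γ.2 ∈ ⋀[ℝ]^4 W)
    -- purity: `2cγ = β²`
    (hpure : csmul (2 * c) γ = cmul β β)
    -- `⟨φ, φ̄⟩ = cγ̄ - β∧β̄ + c̄γ ≠ 0`
    (hnd : csmul c (cconj γ) - cmul β (cconj β) + csmul (starRingEnd ℂ c) γ ≠ 0) :
    -- writing `B + iω := β/c`, `ω` is nondegenerate: `ω ∧ ω ≠ 0` …
    (csmul c⁻¹ β).2 * (csmul c⁻¹ β).2 ≠ 0 ∧
    -- … and `φ = c + β + γ = c·exp(B + iω)`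
    cconst c + β + γ = csmul c (cexp (csmul c⁻¹ β)) := by
  obtain ⟨hβ1, hβ2⟩ := hβ
  set b : CForm W := csmul c⁻¹ β with hbdef
  have hβb : β = csmul c b := by
    rw [hbdef, csmul_csmul, mul_inv_cancel₀ hc, csmul_one]
  have hB2 : b.1 ∈ ⋀[ℝ]^2 W := by
    simp only [hbdef, csmul]
    exact Submodule.sub_mem _ (Submodule.smul_mem _ _ hβ1) (Submodule.smul_mem _ _ hβ2)
  have hω2 : b.2 ∈ ⋀[ℝ]^2 W := by
    simp only [hbdef, csmul]
    exact Submodule.add_mem _ (Submodule.smul_mem _ _ hβ1) (Submodule.smul_mem _ _ hβ2)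
  have hcomm : b.1 * b.2 = b.2 * b.1 := wedge2_comm hB2 hω2
  have h2c : (2 : ℂ) * c ≠ 0 := mul_ne_zero two_ne_zero hc
  have hγ : γ = csmul (c / 2) (cmul b b) := by
    have h := congrArg (csmul (2 * c)⁻¹) hpure
    rw [csmul_csmul, inv_mul_cancel₀ h2c, csmul_one] at h
    rw [h, hβb, cmul_csmul_left, cmul_csmul_right, csmul_csmul, csmul_csmul]
    congr 1
    field_simp
  constructor
  · intro hzero
    refine hnd ?_
    have e1 : c * (starRingEnd ℂ) (c / 2) = ((Complex.normSq c / 2 : ℝ) : ℂ) := by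
      rw [map_div₀, map_ofNat, mul_div_assoc', Complex.mul_conj]
      push_cast
      ring
    have e2 : c * (starRingEnd ℂ) c = ((Complex.normSq c : ℝ) : ℂ) := Complex.mul_conj c
    have e3 : (starRingEnd ℂ) c * (c / 2) = ((Complex.normSq c / 2 : ℝ) : ℂ) := by
      rw [mul_div_assoc', mul_comm, Complex.mul_conj]
      push_cast
      ring
    have hγc : csmul c (cconj γ) =
        (Complex.normSq c / 2 : ℝ) • cmul (cconj b) (cconj b) := by
      rw [hγ, cconj_csmul, cconj_cmul, csmul_csmul, e1, csmul_real]
    have hββ : cmul β (cconj β) = (Complex.normSq c : ℝ) • cmul b (cconj b) := by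
      rw [hβb, cconj_csmul, cmul_csmul_left, cmul_csmul_right, csmul_csmul, e2, csmul_real]
    have hγ2 : csmul ((starRingEnd ℂ) c) γ = (Complex.normSq c / 2 : ℝ) • cmul b b := by
      rw [hγ, csmul_csmul, e3, csmul_real]
    rw [hγc, hββ, hγ2]
    simp only [Prod.ext_iff, cmul, cconj, Prod.fst_sub, Prod.snd_sub, Prod.fst_add,
      Prod.snd_add, Prod.smul_fst, Prod.smul_snd, Prod.fst_zero, Prod.snd_zero,
      mul_neg, neg_mul, neg_neg, sub_neg_eq_add, hzero, hcomm, add_zero, sub_zero,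
      smul_add, smul_sub, smul_neg]
    constructor <;> module
  · have t : ∀ {u v w : ExteriorAlgebra ℝ W}, u ∈ ⋀[ℝ]^2 W → v ∈ ⋀[ℝ]^2 W →
        w ∈ ⋀[ℝ]^2 W → u * (v * w) = 0 := fun hu hv hw => triple_wedge_zero hdim hu hv hw
    have h2 : cpow b 2 = cmul b b := by
      show cmul b (cmul b ((1 : ExteriorAlgebra ℝ W), (0 : ExteriorAlgebra ℝ W))) = cmul b b
      rw [cmul_one']
    have h3 : cpow b 3 = 0 := by
      show cmul b (cpow b 2) = 0
      rw [h2]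
      have expand : cmul b (cmul b b) =
          (b.1 * (b.1 * b.1 - b.2 * b.2) - b.2 * (b.1 * b.2 + b.2 * b.1),
           b.1 * (b.1 * b.2 + b.2 * b.1) + b.2 * (b.1 * b.1 - b.2 * b.2)) := rfl
      rw [expand, mul_sub, mul_sub, mul_add, mul_add,
        t hB2 hB2 hB2, t hB2 hω2 hω2, t hω2 hB2 hω2, t hω2 hω2 hB2,
        t hB2 hB2 hω2, t hB2 hω2 hB2, t hω2 hB2 hB2, t hω2 hω2 hω2]
      simp [Prod.ext_iff]
    have h4 : cpow b 4 = 0 := by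
      show cmul b (cpow b 3) = 0
      rw [h3, cmul_zero']
    have h1 : cpow b 1 = b := by
      show cmul b ((1 : ExteriorAlgebra ℝ W), (0 : ExteriorAlgebra ℝ W)) = b
      rw [cmul_one']
    have hexp : cexp b = ((1 : ExteriorAlgebra ℝ W), (0 : ExteriorAlgebra ℝ W)) + b
        + (2⁻¹ : ℝ) • cmul b b := by
      unfold cexp
      rw [hdim]
      rw [Finset.sum_range_succ, Finset.sum_range_succ, Finset.sum_range_succ,
        Finset.sum_range_succ, Finset.sum_range_succ, Finset.sum_range_zero,
        h3, h4, h2, h1]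
      show (0 : CForm W) + (Nat.factorial 0 : ℝ)⁻¹ • cpow b 0
          + (Nat.factorial 1 : ℝ)⁻¹ • b + (Nat.factorial 2 : ℝ)⁻¹ • cmul b b
          + (Nat.factorial 3 : ℝ)⁻¹ • (0 : CForm W)
          + (Nat.factorial 4 : ℝ)⁻¹ • (0 : CForm W) = _
      norm_num [Nat.factorial, cpow]
    rw [hexp, csmul_add, csmul_add, csmul_smul, ← hβb]
    have hc1 : csmul c ((1 : ExteriorAlgebra ℝ W), (0 : ExteriorAlgebra ℝ W)) = cconst c := by
      simp [csmul, cconst, Algebra.algebraMap_eq_smul_one, Prod.ext_iff]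
    have hγ' : γ = (2⁻¹ : ℝ) • csmul c (cmul b b) := by
      rw [hγ, ← csmul_real, csmul_csmul]
      congr 1
      push_cast
      ring
    rw [hc1, ← hγ']
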